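/- arXiv:2403.07749 — 2 statements merged into one kernel-verified Lean document; each statement's English description precedes it below -/
import Mathlib

section
/- Let H be the sum RKHS of finite-dimensional RKHSs H¹ and H² with kernel K = K¹ + K². Then every f ∈ H can be written as a finite linear combination f = Σ_{k=1}^n β_k K(·, y_k) for some points y_1,...,y_n ∈ X and scalars β_1,...,β_n ∈ ℝ, and moreover with the same coefficients, L^i(f) = Σ_k β_k K^i(·, y_k) for i = 1, 2. -/
open RealInnerProductSpace

/-! The reproducing property `⟪p, κ x⟫ = L p x` of the kernel sections `κ x = (K¹(·,x), K²(·,x))`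
makes `ker L` the orthogonal complement of their span, so in finite dimension `(ker L)ᗮ` is exactly
the set of finite combinations `∑ β_k κ(y_k)`. Since `L` is injective on `(ker L)ᗮ`, the
minimal-norm decomposition of `f` is such a combination, and applying `L`, resp. each coordinate
embedding, to it gives the kernel expansions of `f`, resp. of `L¹ f` and `L² f`, with the same
coefficients. -/

theorem Submodule.exists_fin_sum_eq_of_mem_span_range {R M ι : Type*} [Semiring R]
    [AddCommMonoid M] [Module R M] {v : ι → M} {m : M} (hm : m ∈ Submodule.span R (Set.range v)) :
    ∃ (n : ℕ) (y : Fin n → ι) (β : Fin n → R), ∑ k, β k • v (y k) = m := by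
  obtain ⟨n, β, g, rfl⟩ := Submodule.mem_span_set'.mp hm
  choose y hy using fun k => (g k).2
  exact ⟨n, y, β, by simp only [hy]⟩

theorem LinearMap.apply_sum_smul_of_apply_eq_kernel {R H X : Type*} [CommSemiring R]
    [AddCommMonoid H] [Module R H] (j : H →ₗ[R] (X → R)) {K : X → X → R} {k : X → H}
    (hk : ∀ x, j (k x) = fun y => K y x) {n : ℕ} (y : Fin n → X) (β : Fin n → R) :
    j (∑ i, β i • k (y i)) = fun x => ∑ i, β i * K x (y i) := by
  funext x
  simp [hk]

section OrthogonalKer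

variable {E F : Type*} [NormedAddCommGroup E] [InnerProductSpace ℝ E] [AddCommGroup F]
  [Module ℝ F]

theorem LinearMap.injOn_orthogonal_ker (L : E →ₗ[ℝ] F) : Set.InjOn L (LinearMap.ker L)ᗮ := by
  intro p hp p' hp' h
  have hmem : p - p' ∈ LinearMap.ker L ⊓ (LinearMap.ker L)ᗮ :=
    Submodule.mem_inf.mpr ⟨by rw [LinearMap.mem_ker, map_sub, h, sub_self], sub_mem hp hp'⟩
  rw [Submodule.inf_orthogonal_eq_bot, Submodule.mem_bot] at hmem
  exact sub_eq_zero.mp hmem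

theorem LinearMap.exists_mem_orthogonal_ker_apply_eq (L : E →ₗ[ℝ] F)
    [(LinearMap.ker L).HasOrthogonalProjection] (q : E) :
    ∃ p ∈ (LinearMap.ker L)ᗮ, L p = L q := by
  obtain ⟨z, hz, p, hp, rfl⟩ := (LinearMap.ker L).exists_add_mem_mem_orthogonal q
  exact ⟨p, hp, by rw [map_add, LinearMap.mem_ker.mp hz, zero_add]⟩

theorem LinearMap.orthogonal_ker_eq_span_of_inner_eq {X : Type*} {L : E →ₗ[ℝ] (X → ℝ)}
    {κ : X → E} [(Submodule.span ℝ (Set.range κ)).HasOrthogonalProjection]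
    (hκ : ∀ p x, ⟪p, κ x⟫ = L p x) :
    (LinearMap.ker L)ᗮ = Submodule.span ℝ (Set.range κ) := by
  refine le_antisymm ?_ ?_
  · conv_rhs => rw [← Submodule.orthogonal_orthogonal (Submodule.span ℝ (Set.range κ))]
    refine Submodule.orthogonal_le fun p hp => LinearMap.mem_ker.mpr (funext fun x => ?_)
    rw [← hκ]
    exact Submodule.inner_left_of_mem_orthogonal (Submodule.subset_span (Set.mem_range_self x)) hp
  · rw [Submodule.span_le]
    rintro _ ⟨x, rfl⟩ u hu
    rw [hκ, LinearMap.mem_ker.mp hu, Pi.zero_apply]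

end OrthogonalKer

theorem stmt_7_general {X : Type*}
    {H1 H2 : Type*} [NormedAddCommGroup H1] [InnerProductSpace ℝ H1] [FiniteDimensional ℝ H1]
    [NormedAddCommGroup H2] [InnerProductSpace ℝ H2] [FiniteDimensional ℝ H2]
    (j1 : H1 →ₗ[ℝ] (X → ℝ))
    (j2 : H2 →ₗ[ℝ] (X → ℝ))
    (K1 K2 : X → X → ℝ)
    (hrep1 : ∀ x : X, ∃ k : H1, j1 k = (fun y => K1 y x) ∧ ∀ f : H1, ⟪f, k⟫ = j1 f x)
    (hrep2 : ∀ x : X, ∃ k : H2, j2 k = (fun y => K2 y x) ∧ ∀ f : H2, ⟪f, k⟫ = j2 f x)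
    (L : WithLp 2 (H1 × H2) →ₗ[ℝ] (X → ℝ))
    (hL : ∀ p : WithLp 2 (H1 × H2), L p = j1 p.ofLp.1 + j2 p.ofLp.2) :
    ∀ f : X → ℝ, f ∈ LinearMap.range L →
      ∃ (n : ℕ) (y : Fin n → X) (β : Fin n → ℝ),
        f = (fun x => ∑ k, β k * (K1 x (y k) + K2 x (y k))) ∧
        ∀ p : WithLp 2 (H1 × H2), p ∈ (LinearMap.ker L)ᗮ → L p = f →
          j1 p.ofLp.1 = (fun x => ∑ k, β k * K1 x (y k)) ∧
          j2 p.ofLp.2 = (fun x => ∑ k, β k * K2 x (y k)) := by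
  rintro _ ⟨q, rfl⟩
  choose k1 hk1 hrep1 using hrep1
  choose k2 hk2 hrep2 using hrep2
  set κ : X → WithLp 2 (H1 × H2) := fun x => WithLp.toLp 2 (k1 x, k2 x)
  have hκ : ∀ p x, ⟪p, κ x⟫ = L p x := fun p x => by
    rw [WithLp.prod_inner_apply, hL]
    exact congrArg₂ (· + ·) (hrep1 x _) (hrep2 x _)
  obtain ⟨p, hpM, hLp⟩ := L.exists_mem_orthogonal_ker_apply_eq q
  obtain ⟨n, y, β, rfl⟩ := Submodule.exists_fin_sum_eq_of_mem_span_range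
    (LinearMap.orthogonal_ker_eq_span_of_inner_eq hκ ▸ hpM)
  have h1 := j1.apply_sum_smul_of_apply_eq_kernel hk1 y β
  have h2 := j2.apply_sum_smul_of_apply_eq_kernel hk2 y β
  have hcomp : (∑ k, β k • κ (y k)).ofLp = (∑ k, β k • k1 (y k), ∑ k, β k • k2 (y k)) := by
    simp [κ, WithLp.ofLp_sum, Prod.ext_iff, Prod.fst_sum, Prod.snd_sum]
  refine ⟨n, y, β, ?_, fun p' hp' hLp' => ?_⟩
  · rw [← hLp, hL, hcomp, h1, h2]
    funext x
    simp only [Pi.add_apply, mul_add, Finset.sum_add_distrib]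
  · rw [L.injOn_orthogonal_ker hp' hpM (hLp'.trans hLp.symm), hcomp]
    exact ⟨h1, h2⟩

/-- Lemma 1 of the paper: let `H¹ = span{φ¹_j}`, `H² = span{φ²_j}` be
finite-dimensional feature-map RKHSs with kernels `K^i(x,y) = ∑_j φ^i_j(x) φ^i_j(y)`,
and let `H = H¹ + H²` (range of the sum map `L`) with kernel `K = K¹ + K²` and
`M = (ker L)ᗮ`. Then every `f ∈ H` is a finite linear combination
`f = ∑_k β_k K(·, y_k)`, and with the same coefficients the minimal-norm decomposition
`(L¹(f), L²(f)) ∈ M` satisfies `L^i(f) = ∑_k β_k K^i(·, y_k)`. -/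
theorem stmt_7 {X : Type*}
    {H1 H2 : Type*} [NormedAddCommGroup H1] [InnerProductSpace ℝ H1] [FiniteDimensional ℝ H1]
    [NormedAddCommGroup H2] [InnerProductSpace ℝ H2] [FiniteDimensional ℝ H2]
    (j1 : H1 →ₗ[ℝ] (X → ℝ)) (hj1 : Function.Injective j1)
    (j2 : H2 →ₗ[ℝ] (X → ℝ)) (hj2 : Function.Injective j2)
    {n1 n2 : ℕ} (φ1 : Fin n1 → X → ℝ) (φ2 : Fin n2 → X → ℝ)
    (hr1 : LinearMap.range j1 = Submodule.span ℝ (Set.range φ1))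
    (hr2 : LinearMap.range j2 = Submodule.span ℝ (Set.range φ2))
    (K1 K2 : X → X → ℝ)
    (hK1 : ∀ x y : X, K1 x y = ∑ j, φ1 j x * φ1 j y)
    (hK2 : ∀ x y : X, K2 x y = ∑ j, φ2 j x * φ2 j y)
    (hrep1 : ∀ x : X, ∃ k : H1, j1 k = (fun y => K1 y x) ∧ ∀ f : H1, ⟪f, k⟫ = j1 f x)
    (hrep2 : ∀ x : X, ∃ k : H2, j2 k = (fun y => K2 y x) ∧ ∀ f : H2, ⟪f, k⟫ = j2 f x)
    (L : WithLp 2 (H1 × H2) →ₗ[ℝ] (X → ℝ))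
    (hL : ∀ p : WithLp 2 (H1 × H2), L p = j1 p.ofLp.1 + j2 p.ofLp.2) :
    ∀ f : X → ℝ, f ∈ LinearMap.range L →
      ∃ (n : ℕ) (y : Fin n → X) (β : Fin n → ℝ),
        f = (fun x => ∑ k, β k * (K1 x (y k) + K2 x (y k))) ∧
        ∀ p : WithLp 2 (H1 × H2), p ∈ (LinearMap.ker L)ᗮ → L p = f →
          j1 p.ofLp.1 = (fun x => ∑ k, β k * K1 x (y k)) ∧
          j2 p.ofLp.2 = (fun x => ∑ k, β k * K2 x (y k)) :=
  stmt_7_general j1 j2 K1 K2 hrep1 hrep2 L hL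
end

section
/- Let H be the sum RKHS with kernel K = K¹ + K², let L̄^i(f)(x) = ⟨f, K^i(·,x)⟩_H, and let √(L̄^i) be its positive square root. Define H̄^i = range(√(L̄^i)) with inner product ⟨√(L̄^i)(f̄), √(L̄^i)(ḡ)⟩_{H̄^i} = ⟨Π_{M^i} f̄, Π_{M^i} ḡ⟩_H, where M^i = ker(√(L̄^i))^⊥. Then H̄^i is a reproducing kernel Hilbert space with reproducing kernel K^i: for all g ∈ H̄^i and y ∈ X, ⟨g, K^i(·,y)⟩_{H̄^i} = g(y). -/
open RealInnerProductSpace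

/-! Since `L̄ = S²` is self-adjoint, the reproducing property turns `L̄ (K(·,y))` into `K^i(·,y)`,
so `K^i(·,y) = S (S k_y)` with `k_y = K(·,y)`. As `S k_y ∈ range S ⊆ (ker S)ᗮ`, the projection
onto `M = (ker S)ᗮ` fixes it, and `⟪S f̄, K^i(·,y)⟫_{H̄} = ⟪Π_M f̄, S k_y⟫ = ⟪S f̄, k_y⟫ = (S f̄)(y)`. -/

namespace LinearMap.IsSymmetric

open scoped InnerProductSpace

variable {𝕜 E : Type*} [RCLike 𝕜] [NormedAddCommGroup E] [InnerProductSpace 𝕜 E]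

theorem range_le_orthogonal_ker {S : E →ₗ[𝕜] E} (hS : S.IsSymmetric) :
    range S ≤ (ker S)ᗮ := by
  rw [← hS.orthogonal_range]
  exact Submodule.le_orthogonal_orthogonal _

theorem inner_starProjection_orthogonal_ker_left {S : E →ₗ[𝕜] E} (hS : S.IsSymmetric)
    [(ker S)ᗮ.HasOrthogonalProjection] (f g : E) :
    ⟪(ker S)ᗮ.starProjection f, S g⟫_𝕜 = ⟪S f, g⟫_𝕜 := by
  rw [Submodule.inner_starProjection_left_eq_right,
    Submodule.starProjection_eq_self_iff.mpr (hS.range_le_orthogonal_ker (mem_range_self S g)),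
    hS]

theorem eq_apply_of_forall_inner {L : E →ₗ[𝕜] E} (hL : L.IsSymmetric) {k v : E}
    (h : ∀ f, ⟪f, v⟫_𝕜 = ⟪L f, k⟫_𝕜) : v = L k :=
  ext_inner_left 𝕜 fun f => by rw [h, hL]

end LinearMap.IsSymmetric

theorem stmt_17_general {X : Type*}
    {H : Type*} [NormedAddCommGroup H] [InnerProductSpace ℝ H] [FiniteDimensional ℝ H]
    (j : H →ₗ[ℝ] (X → ℝ))
    (κ : X → H)
    (hrep : ∀ (f : H) (x : X), ⟪f, κ x⟫ = j f x)
    (κi : X → H)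
    (Lbar : H →ₗ[ℝ] H) (hLbar : ∀ (f : H) (x : X), j (Lbar f) x = ⟪f, κi x⟫)
    -- `S` is the positive square root of `L̄^i`
    (S : H →ₗ[ℝ] H)
    (hSs : ∀ f g : H, ⟪S f, g⟫ = ⟪f, S g⟫)
    (hSL : S ∘ₗ S = Lbar)
    -- the inner product on `H̄^i = range S`
    (p : ↥(LinearMap.range S) → ↥(LinearMap.range S) → ℝ)
    (hp : ∀ fb gb : H,
      p ⟨S fb, LinearMap.mem_range_self S fb⟩ ⟨S gb, LinearMap.mem_range_self S gb⟩ =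
        ⟪(Submodule.orthogonalProjection (LinearMap.ker S)ᗮ fb : H),
         (Submodule.orthogonalProjection (LinearMap.ker S)ᗮ gb : H)⟫) :
    ∀ y : X, ∃ hm : κi y ∈ LinearMap.range S,
      ∀ g : ↥(LinearMap.range S), p g ⟨κi y, hm⟩ = j (↑g : H) y := by
  have hS : S.IsSymmetric := hSs
  have hL : Lbar.IsSymmetric := hSL ▸ hS.mul_of_commute hS (Commute.refl S)
  intro y
  have hκi : κi y = S (S (κ y)) := by
    rw [← LinearMap.comp_apply, hSL]
    exact hL.eq_apply_of_forall_inner fun f => by rw [← hLbar, hrep]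
  refine ⟨⟨S (κ y), hκi.symm⟩, ?_⟩
  rintro ⟨_, fb, rfl⟩
  have hSκ : S (κ y) ∈ (LinearMap.ker S)ᗮ := hS.range_le_orthogonal_ker ⟨κ y, rfl⟩
  calc p ⟨S fb, LinearMap.mem_range_self S fb⟩ ⟨κi y, _⟩
      = p ⟨S fb, LinearMap.mem_range_self S fb⟩ ⟨S (S (κ y)), LinearMap.mem_range_self S _⟩ := by
        congr 2
    _ = ⟪(LinearMap.ker S)ᗮ.starProjection fb, S (κ y)⟫ := by
        rw [hp]
        exact congrArg _ (Submodule.starProjection_eq_self_iff.mpr hSκ)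
    _ = j (S fb) y := by rw [hS.inner_starProjection_orthogonal_ker_left, hrep]

/-- Theorem 3 of the paper: let `H` be the sum RKHS with kernel
`K = K¹ + K²` (feature-map kernels), let `L̄^i(f)(x) = ⟪f, K^i(·,x)⟫_H`, let `S = √L̄^i`
be its positive square root, and let `H̄^i = range S` carry the inner product
`⟪S f̄, S ḡ⟫_{H̄^i} = ⟪Π_{M^i} f̄, Π_{M^i} ḡ⟫_H` where `M^i = (ker S)ᗮ`. Then `H̄^i` is an
RKHS with reproducing kernel `K^i`: each section `K^i(·,y)` lies in `H̄^i` and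
`⟪g, K^i(·,y)⟫_{H̄^i} = g(y)` for all `g ∈ H̄^i`, `y ∈ X`. -/
theorem stmt_17 {X : Type*}
    {H : Type*} [NormedAddCommGroup H] [InnerProductSpace ℝ H] [FiniteDimensional ℝ H]
    (j : H →ₗ[ℝ] (X → ℝ)) (hj : Function.Injective j)
    {n1 n2 : ℕ} (φ1 : Fin n1 → X → ℝ) (φ2 : Fin n2 → X → ℝ)
    (K K1 K2 : X → X → ℝ)
    (hK1 : ∀ x y : X, K1 x y = ∑ l, φ1 l x * φ1 l y)
    (hK2 : ∀ x y : X, K2 x y = ∑ l, φ2 l x * φ2 l y)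
    (hsum : ∀ x y : X, K x y = K1 x y + K2 x y)
    (κ : X → H) (hκ : ∀ x : X, j (κ x) = fun y => K x y)
    (hrep : ∀ (f : H) (x : X), ⟪f, κ x⟫ = j f x)
    (hspan : Submodule.span ℝ (Set.range κ) = ⊤)
    (i : Fin 2)
    (κi : X → H) (hκi : ∀ x : X, j (κi x) = fun y => (if i = 0 then K1 else K2) y x)
    (Lbar : H →ₗ[ℝ] H) (hLbar : ∀ (f : H) (x : X), j (Lbar f) x = ⟪f, κi x⟫)
    -- `S` is the positive square root of `L̄^i`
    (S : H →ₗ[ℝ] H)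
    (hSs : ∀ f g : H, ⟪S f, g⟫ = ⟪f, S g⟫)
    (hSp : ∀ f : H, 0 ≤ ⟪S f, f⟫)
    (hSL : S ∘ₗ S = Lbar)
    -- the inner product on `H̄^i = range S`
    (p : ↥(LinearMap.range S) → ↥(LinearMap.range S) → ℝ)
    (hp : ∀ fb gb : H,
      p ⟨S fb, LinearMap.mem_range_self S fb⟩ ⟨S gb, LinearMap.mem_range_self S gb⟩ =
        ⟪(Submodule.orthogonalProjection (LinearMap.ker S)ᗮ fb : H),
         (Submodule.orthogonalProjection (LinearMap.ker S)ᗮ gb : H)⟫) :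
    ∀ y : X, ∃ hm : κi y ∈ LinearMap.range S,
      ∀ g : ↥(LinearMap.range S), p g ⟨κi y, hm⟩ = j (↑g : H) y :=
  stmt_17_general j κ hrep κi Lbar hLbar S hSs hSL p hp
end
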